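/- arXiv:2302.04694 — 2 statements merged into one kernel-verified Lean document; each statement's English description precedes it below -/
import Mathlib

section
/- Let S be a finite nonempty set, c a cost function, and R ⊆ S. Suppose that for every {i,j} ∈ binom(R,2) it holds that max{ Σ_{{p,q,r}∈binom(R,3)} c_{pqr}·(1 − x_{pq}·x_{pr}·x_{qr}) + Σ_{{p,q}∈binom(R,2)} c_{pq}·(1 − x_{pq}) : x ∈ X_S, x_{ij} = 0 } ≤ min{ Σ_{{p,q,r}∈T_{δ(R)}} c_{pqr}·x_{pq}·x_{pr}·x_{qr} + Σ_{{p,q}∈δ(R)} c_{pq}·x_{pq} : x ∈ X_S, x_{ij} = 0 }. Then there exists an optimal solution x* of min_{x∈X_S} φ_c(x) such that x*_{ij} = 1 for all {i,j} ∈ binom(R,2). -/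
open Finset

/-- `binom(S,2)`: the set of 2-element subsets (unordered pairs) of the ground set. -/
def pairs (V : Type*) [Fintype V] [DecidableEq V] : Finset (Finset V) :=
  (univ : Finset V).powersetCard 2

/-- `binom(S,3)`: the set of 3-element subsets (unordered triples) of the ground set. -/
def triples (V : Type*) [Fintype V] [DecidableEq V] : Finset (Finset V) :=
  (univ : Finset V).powersetCard 3

/-- The feasible set `X_S`: maps `x : binom(S,2) → {0,1}` satisfying the triangle
inequalities `x_{pq} + x_{qr} - x_{pr} ≤ 1` for all pairwise distinct `p, q, r`. -/
def feasible {V : Type*} [Fintype V] [DecidableEq V] (x : Finset V → ℝ) : Prop :=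
  (∀ e ∈ pairs V, x e = 0 ∨ x e = 1) ∧
    ∀ p q r : V, p ≠ q → q ≠ r → p ≠ r →
      x {p, q} + x {q, r} - x {p, r} ≤ 1

/-- The cubic objective
`φ_c(x) = Σ_{{p,q,r}} c_{pqr} x_{pq} x_{pr} x_{qr} + Σ_{{p,q}} c_{pq} x_{pq} + c_∅`. -/
def obj {V : Type*} [Fintype V] [DecidableEq V] (c x : Finset V → ℝ) : ℝ :=
  ∑ t ∈ triples V, c t * ∏ e ∈ t.powersetCard 2, x e
    + ∑ e ∈ pairs V, c e * x e + c ∅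

/-- `δ(R)`: the pairs having exactly one element in `R`. -/
def cut {V : Type*} [Fintype V] [DecidableEq V] (R : Finset V) : Finset (Finset V) :=
  (pairs V).filter fun e => (e ∩ R).card = 1

/-- `T_{P'}`: the triples having some 2-element subset in `P'`. -/
def Tof {V : Type*} [Fintype V] [DecidableEq V] (P' : Finset (Finset V)) :
    Finset (Finset V) :=
  (triples V).filter fun t => ∃ e ∈ t.powersetCard 2, e ∈ P'

section Aux
variable {V : Type*} [Fintype V] [DecidableEq V]

lemma mem_pairs_iff {e : Finset V} : e ∈ pairs V ↔ e.card = 2 := by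
  simp [pairs, Finset.mem_powersetCard]

lemma mem_triples_iff {t : Finset V} : t ∈ triples V ↔ t.card = 3 := by
  simp [triples, Finset.mem_powersetCard]

lemma mem_cut_iff {R e : Finset V} : e ∈ cut R ↔ e.card = 2 ∧ (e ∩ R).card = 1 := by
  simp [cut, Finset.mem_filter, mem_pairs_iff]

lemma mem_Tof_iff {P' : Finset (Finset V)} {t : Finset V} :
    t ∈ Tof P' ↔ t ∈ triples V ∧ ∃ e ∈ t.powersetCard 2, e ∈ P' := Finset.mem_filter

lemma pair_mem_pairs {p q : V} (h : p ≠ q) : ({p, q} : Finset V) ∈ pairs V :=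
  mem_pairs_iff.mpr (card_pair h)

lemma R2_subset_pairs {R : Finset V} : R.powersetCard 2 ⊆ pairs V := by
  intro e he
  exact mem_pairs_iff.mpr (Finset.mem_powersetCard.mp he).2

lemma R3_subset_triples {R : Finset V} : R.powersetCard 3 ⊆ triples V := by
  intro t ht
  exact mem_triples_iff.mpr (Finset.mem_powersetCard.mp ht).2

lemma not_cut_of_R2 {R e : Finset V} (he : e ∈ R.powersetCard 2) : e ∉ cut R := by
  obtain ⟨hsub, hcard⟩ := Finset.mem_powersetCard.mp he
  intro hc
  have : e ∩ R = e := Finset.inter_eq_left.mpr hsub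
  rw [mem_cut_iff, this, hcard] at hc
  omega

lemma disjoint_R2_cut {R : Finset V} : Disjoint (R.powersetCard 2) (cut R) :=
  Finset.disjoint_left.mpr fun _ h1 h2 => not_cut_of_R2 h1 h2

lemma disjoint_R3_Tof {R : Finset V} : Disjoint (R.powersetCard 3) (Tof (cut R)) := by
  refine Finset.disjoint_left.mpr fun t h1 h2 => ?_
  obtain ⟨hsub, _⟩ := Finset.mem_powersetCard.mp h1
  obtain ⟨_, e, he, hec⟩ := mem_Tof_iff.mp h2
  obtain ⟨hes, hecard⟩ := Finset.mem_powersetCard.mp he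
  exact not_cut_of_R2 (Finset.mem_powersetCard.mpr ⟨hes.trans hsub, hecard⟩) hec

noncomputable def hatx (R : Finset V) (x : Finset V → ℝ) : Finset V → ℝ :=
  fun s => if s ∈ R.powersetCard 2 then 1 else if s ∈ cut R then 0 else x s

lemma hatx_in {R : Finset V} {x : Finset V → ℝ} {e : Finset V}
    (he : e ∈ R.powersetCard 2) : hatx R x e = 1 := if_pos he

lemma hatx_cut {R : Finset V} {x : Finset V → ℝ} {e : Finset V}
    (he : e ∈ cut R) : hatx R x e = 0 := by
  have h1 : e ∉ R.powersetCard 2 := fun h => not_cut_of_R2 h he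
  simp [hatx, h1, he]

lemma hatx_other {R : Finset V} {x : Finset V → ℝ} {e : Finset V}
    (h1 : e ∉ R.powersetCard 2) (h2 : e ∉ cut R) : hatx R x e = x e := by
  simp [hatx, h1, h2]

lemma pair_mem_R2 {R : Finset V} {p q : V} (h : p ≠ q) (hp : p ∈ R) (hq : q ∈ R) :
    ({p, q} : Finset V) ∈ R.powersetCard 2 := by
  refine Finset.mem_powersetCard.mpr ⟨?_, card_pair h⟩
  intro z hz
  rcases Finset.mem_insert.mp hz with h | h
  · exact h ▸ hp
  · exact (Finset.mem_singleton.mp h) ▸ hq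

lemma pair_mem_cut {R : Finset V} {p q : V} (h : p ≠ q) (hp : p ∈ R) (hq : q ∉ R) :
    ({p, q} : Finset V) ∈ cut R := by
  refine mem_cut_iff.mpr ⟨card_pair h, ?_⟩
  have : ({p, q} : Finset V) ∩ R = {p} := by
    ext z
    simp only [Finset.mem_inter, Finset.mem_insert, Finset.mem_singleton]
    constructor
    · rintro ⟨h1 | h1, h2⟩
      · exact h1
      · exact absurd (h1 ▸ h2) hq
    · rintro rfl; exact ⟨Or.inl rfl, hp⟩
  rw [this, Finset.card_singleton]

lemma pair_not_touched {R : Finset V} {p q : V} (hp : p ∉ R) (hq : q ∉ R) :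
    ({p, q} : Finset V) ∉ R.powersetCard 2 ∧ ({p, q} : Finset V) ∉ cut R := by
  constructor
  · intro hmem
    exact hp ((Finset.mem_powersetCard.mp hmem).1 (Finset.mem_insert_self p {q}))
  · intro hmem
    have : ({p, q} : Finset V) ∩ R = ∅ := by
      ext z
      simp only [Finset.mem_inter, Finset.mem_insert, Finset.mem_singleton,
        Finset.notMem_empty, iff_false, not_and]
      rintro (rfl | rfl) <;> assumption
    rw [mem_cut_iff, this] at hmem
    simp at hmem

lemma feasible_bounds {x : Finset V → ℝ} (hx : feasible x) {e : Finset V}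
    (he : e ∈ pairs V) : 0 ≤ x e ∧ x e ≤ 1 := by
  rcases hx.1 e he with h | h <;> simp [h]

lemma feasible_hatx {R : Finset V} {x : Finset V → ℝ} (hx : feasible x) :
    feasible (hatx R x) := by
  constructor
  · intro e he
    by_cases h1 : e ∈ R.powersetCard 2
    · right; exact hatx_in h1
    by_cases h2 : e ∈ cut R
    · left; exact hatx_cut h2
    · rw [hatx_other h1 h2]; exact hx.1 e he
  · intro p q r hpq hqr hpr
    have hb1 := feasible_bounds hx (pair_mem_pairs hpq)
    have hb2 := feasible_bounds hx (pair_mem_pairs hqr)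
    have hb3 := feasible_bounds hx (pair_mem_pairs hpr)
    by_cases hp : p ∈ R <;> by_cases hq : q ∈ R <;> by_cases hr : r ∈ R
    · rw [hatx_in (pair_mem_R2 hpq hp hq), hatx_in (pair_mem_R2 hqr hq hr),
        hatx_in (pair_mem_R2 hpr hp hr)]; norm_num
    · rw [hatx_in (pair_mem_R2 hpq hp hq), hatx_cut (pair_mem_cut hqr hq hr),
        hatx_cut (pair_mem_cut hpr hp hr)]; norm_num
    · rw [hatx_cut (pair_mem_cut hpq hp hq), Finset.pair_comm q r,
        hatx_cut (pair_mem_cut hqr.symm hr hq), hatx_in (pair_mem_R2 hpr hp hr)]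
      norm_num
    · rw [hatx_cut (pair_mem_cut hpq hp hq), hatx_cut (pair_mem_cut hpr hp hr),
        hatx_other (pair_not_touched hq hr).1 (pair_not_touched hq hr).2]
      linarith [hb2.2]
    · rw [Finset.pair_comm p q, hatx_cut (pair_mem_cut hpq.symm hq hp),
        hatx_in (pair_mem_R2 hqr hq hr), Finset.pair_comm p r,
        hatx_cut (pair_mem_cut hpr.symm hr hp)]; norm_num
    · rw [Finset.pair_comm p q, hatx_cut (pair_mem_cut hpq.symm hq hp),
        hatx_cut (pair_mem_cut hqr hq hr),
        hatx_other (pair_not_touched hp hr).1 (pair_not_touched hp hr).2]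
      linarith [hb3.1]
    · rw [hatx_other (pair_not_touched hp hq).1 (pair_not_touched hp hq).2,
        Finset.pair_comm q r, hatx_cut (pair_mem_cut hqr.symm hr hq),
        Finset.pair_comm p r, hatx_cut (pair_mem_cut hpr.symm hr hp)]
      linarith [hb1.2]
    · rw [hatx_other (pair_not_touched hp hq).1 (pair_not_touched hp hq).2,
        hatx_other (pair_not_touched hq hr).1 (pair_not_touched hq hr).2,
        hatx_other (pair_not_touched hp hr).1 (pair_not_touched hp hr).2]
      exact hx.2 p q r hpq hqr hpr

end Aux

section Aux2
set_option linter.unusedSectionVars false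
variable {V : Type*} [Fintype V] [DecidableEq V]

lemma triple_untouched {R t : Finset V} (ht : t ∈ triples V)
    (h3 : t ∉ R.powersetCard 3) (hT : t ∉ Tof (cut R)) :
    ∀ e ∈ t.powersetCard 2, e ∉ R.powersetCard 2 ∧ e ∉ cut R := by
  intro e he
  have hecut : e ∉ cut R := fun hc => hT (mem_Tof_iff.mpr ⟨ht, e, he, hc⟩)
  refine ⟨?_, hecut⟩
  intro heR
  obtain ⟨heR', hecard⟩ := Finset.mem_powersetCard.mp heR
  have htR : ¬ t ⊆ R := fun hsub =>
    h3 (Finset.mem_powersetCard.mpr ⟨hsub, mem_triples_iff.mp ht⟩)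
  obtain ⟨b, hbt, hbR⟩ := Finset.not_subset.mp htR
  obtain ⟨a, ha⟩ := Finset.card_pos.mp (by rw [hecard]; norm_num : 0 < e.card)
  have haR : a ∈ R := heR' ha
  have hat : a ∈ t := (Finset.mem_powersetCard.mp he).1 ha
  have hab : a ≠ b := fun hh => hbR (hh ▸ haR)
  have hpair : ({a, b} : Finset V) ∈ t.powersetCard 2 := by
    refine Finset.mem_powersetCard.mpr ⟨?_, card_pair hab⟩
    intro z hz
    rcases Finset.mem_insert.mp hz with hh | hh
    · exact hh ▸ hat
    · exact (Finset.mem_singleton.mp hh) ▸ hbt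
  exact hT (mem_Tof_iff.mpr ⟨ht, {a, b}, hpair, pair_mem_cut hab haR hbR⟩)

lemma triple_sum_split (R : Finset V) (c x : Finset V → ℝ) :
    ∑ t ∈ triples V, c t * ∏ e ∈ t.powersetCard 2, hatx R x e
      = ∑ t ∈ triples V, c t * ∏ e ∈ t.powersetCard 2, x e
        + ∑ t ∈ R.powersetCard 3, c t * (1 - ∏ e ∈ t.powersetCard 2, x e)
        - ∑ t ∈ Tof (cut R), c t * ∏ e ∈ t.powersetCard 2, x e := by
  have hsub : R.powersetCard 3 ∪ Tof (cut R) ⊆ triples V :=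
    Finset.union_subset R3_subset_triples (Finset.filter_subset _ _)
  have key : ∑ t ∈ triples V,
      (c t * ∏ e ∈ t.powersetCard 2, hatx R x e - c t * ∏ e ∈ t.powersetCard 2, x e)
      = ∑ t ∈ R.powersetCard 3 ∪ Tof (cut R),
      (c t * ∏ e ∈ t.powersetCard 2, hatx R x e - c t * ∏ e ∈ t.powersetCard 2, x e) := by
    refine (Finset.sum_subset hsub ?_).symm
    intro t ht htu
    have h3 : t ∉ R.powersetCard 3 := fun hh => htu (Finset.mem_union_left _ hh)
    have hT : t ∉ Tof (cut R) := fun hh => htu (Finset.mem_union_right _ hh)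
    have : ∏ e ∈ t.powersetCard 2, hatx R x e = ∏ e ∈ t.powersetCard 2, x e := by
      refine Finset.prod_congr rfl fun e he => ?_
      obtain ⟨h1, h2⟩ := triple_untouched ht h3 hT e he
      exact hatx_other h1 h2
    rw [this]; ring
  rw [Finset.sum_union disjoint_R3_Tof] at key
  have e1 : ∑ t ∈ R.powersetCard 3,
      (c t * ∏ e ∈ t.powersetCard 2, hatx R x e - c t * ∏ e ∈ t.powersetCard 2, x e)
      = ∑ t ∈ R.powersetCard 3, c t * (1 - ∏ e ∈ t.powersetCard 2, x e) := by
    refine Finset.sum_congr rfl fun t ht => ?_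
    obtain ⟨hsub', hcard⟩ := Finset.mem_powersetCard.mp ht
    have : ∏ e ∈ t.powersetCard 2, hatx R x e = 1 := by
      refine Finset.prod_eq_one fun e he => ?_
      obtain ⟨hes, hec⟩ := Finset.mem_powersetCard.mp he
      exact hatx_in (Finset.mem_powersetCard.mpr ⟨hes.trans hsub', hec⟩)
    rw [this]; ring
  have e2 : ∑ t ∈ Tof (cut R),
      (c t * ∏ e ∈ t.powersetCard 2, hatx R x e - c t * ∏ e ∈ t.powersetCard 2, x e)
      = ∑ t ∈ Tof (cut R), -(c t * ∏ e ∈ t.powersetCard 2, x e) := by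
    refine Finset.sum_congr rfl fun t ht => ?_
    obtain ⟨_, e, he, hec⟩ := mem_Tof_iff.mp ht
    have : ∏ e' ∈ t.powersetCard 2, hatx R x e' = 0 :=
      Finset.prod_eq_zero he (hatx_cut hec)
    rw [this]; ring
  rw [e1, e2, Finset.sum_neg_distrib] at key
  rw [Finset.sum_sub_distrib] at key
  linarith [key]

lemma pair_sum_split (R : Finset V) (c x : Finset V → ℝ) :
    ∑ e ∈ pairs V, c e * hatx R x e
      = ∑ e ∈ pairs V, c e * x e
        + ∑ e ∈ R.powersetCard 2, c e * (1 - x e)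
        - ∑ e ∈ cut R, c e * x e := by
  have hsub : R.powersetCard 2 ∪ cut R ⊆ pairs V :=
    Finset.union_subset R2_subset_pairs (Finset.filter_subset _ _)
  have key : ∑ e ∈ pairs V, (c e * hatx R x e - c e * x e)
      = ∑ e ∈ R.powersetCard 2 ∪ cut R, (c e * hatx R x e - c e * x e) := by
    refine (Finset.sum_subset hsub ?_).symm
    intro e he heu
    have h1 : e ∉ R.powersetCard 2 := fun hh => heu (Finset.mem_union_left _ hh)
    have h2 : e ∉ cut R := fun hh => heu (Finset.mem_union_right _ hh)
    rw [hatx_other h1 h2]; ring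
  rw [Finset.sum_union disjoint_R2_cut] at key
  have e1 : ∑ e ∈ R.powersetCard 2, (c e * hatx R x e - c e * x e)
      = ∑ e ∈ R.powersetCard 2, c e * (1 - x e) := by
    refine Finset.sum_congr rfl fun e he => ?_
    rw [hatx_in he]; ring
  have e2 : ∑ e ∈ cut R, (c e * hatx R x e - c e * x e)
      = ∑ e ∈ cut R, -(c e * x e) := by
    refine Finset.sum_congr rfl fun e he => ?_
    rw [hatx_cut he]; ring
  rw [e1, e2, Finset.sum_neg_distrib, Finset.sum_sub_distrib] at key
  linarith [key]

lemma obj_congr {c x y : Finset V → ℝ} (hxy : ∀ e ∈ pairs V, x e = y e) :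
    obj c x = obj c y := by
  have h1 : ∑ t ∈ triples V, c t * ∏ e ∈ t.powersetCard 2, x e
      = ∑ t ∈ triples V, c t * ∏ e ∈ t.powersetCard 2, y e := by
    refine Finset.sum_congr rfl fun t ht => ?_
    congr 1
    refine Finset.prod_congr rfl fun e he => ?_
    exact hxy e (mem_pairs_iff.mpr (Finset.mem_powersetCard.mp he).2)
  have h2 : ∑ e ∈ pairs V, c e * x e = ∑ e ∈ pairs V, c e * y e :=
    Finset.sum_congr rfl fun e he => by rw [hxy e he]
  simp [obj, h1, h2]

def ind (A : Finset (Finset V)) : Finset V → ℝ := fun s => if s ∈ A then 1 else 0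

end Aux2

/--
Let `S` be a finite nonempty set, `c` a cost function, and `R ⊆ S`.
Suppose that for every `{i,j} ∈ binom(R,2)`,
`max{ Σ_{{p,q,r} ∈ binom(R,3)} c_{pqr} (1 − x_{pq} x_{pr} x_{qr})
      + Σ_{{p,q} ∈ binom(R,2)} c_{pq} (1 − x_{pq}) : x ∈ X_S, x_{ij} = 0 }
 ≤ min{ Σ_{{p,q,r} ∈ T_{δ(R)}} c_{pqr} x_{pq} x_{pr} x_{qr}
      + Σ_{{p,q} ∈ δ(R)} c_{pq} x_{pq} : x ∈ X_S, x_{ij} = 0 }`.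
Then there exists an optimal solution `x*` of `min_{x ∈ X_S} φ_c(x)` such that
`x*_{ij} = 1` for all `{i,j} ∈ binom(R,2)`.  (The comparison of the maximum with the
minimum is stated equivalently by quantifying over the two feasible vectors.)
-/
theorem subset_join_persistency {V : Type*} [Fintype V] [DecidableEq V] [Nonempty V]
    (c : Finset V → ℝ) (R : Finset V)
    (h : ∀ e ∈ R.powersetCard 2, ∀ x y : Finset V → ℝ,
        feasible x → x e = 0 → feasible y → y e = 0 →
        ∑ t ∈ R.powersetCard 3, c t * (1 - ∏ e' ∈ t.powersetCard 2, x e')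
            + ∑ e' ∈ R.powersetCard 2, c e' * (1 - x e')
          ≤ ∑ t ∈ Tof (cut R), c t * ∏ e' ∈ t.powersetCard 2, y e'
            + ∑ e' ∈ cut R, c e' * y e') :
    ∃ xstar : Finset V → ℝ, feasible xstar ∧
      (∀ x : Finset V → ℝ, feasible x → obj c xstar ≤ obj c x) ∧
      ∀ e ∈ R.powersetCard 2, xstar e = 1 := by
  classical
  have hfeas0 : feasible (ind (∅ : Finset (Finset V))) := by
    constructor
    · intro e _; left; simp [ind]
    · intro p q r _ _ _; simp [ind]
  set T : Finset (Finset (Finset V)) :=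
    univ.filter (fun A => feasible (ind A)) with hTdef
  have hTne : T.Nonempty := ⟨∅, by simp [hTdef, hfeas0]⟩
  obtain ⟨A₀, hA₀T, hmin⟩ := T.exists_min_image (fun A => obj c (ind A)) hTne
  have hx0feas : feasible (ind A₀) := (Finset.mem_filter.mp hA₀T).2
  set x0 : Finset V → ℝ := ind A₀ with hx0def
  have hopt : ∀ x : Finset V → ℝ, feasible x → obj c x0 ≤ obj c x := by
    intro x hx
    set A : Finset (Finset V) := (pairs V).filter (fun e => x e = 1) with hAdef
    have hagree : ∀ e ∈ pairs V, ind A e = x e := by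
      intro e he
      rcases hx.1 e he with h0 | h1
      · have hne : e ∉ A := by simp [hAdef, he, h0]
        simp [ind, hne, h0]
      · have hin : e ∈ A := by simp [hAdef, he, h1]
        simp [ind, hin, h1]
    have hAfeas : feasible (ind A) := by
      constructor
      · intro e _; by_cases hh : e ∈ A <;> simp [ind, hh]
      · intro p q r hpq hqr hpr
        rw [hagree _ (pair_mem_pairs hpq), hagree _ (pair_mem_pairs hqr),
          hagree _ (pair_mem_pairs hpr)]
        exact hx.2 p q r hpq hqr hpr
    calc obj c x0 ≤ obj c (ind A) := hmin A (by simp [hTdef, hAfeas])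
      _ = obj c x := obj_congr hagree
  by_cases hall : ∀ e ∈ R.powersetCard 2, x0 e = 1
  · exact ⟨x0, hx0feas, hopt, hall⟩
  · push_neg at hall
    obtain ⟨e₀, he₀, hne⟩ := hall
    have hzero : x0 e₀ = 0 := by
      rcases hx0feas.1 e₀ (R2_subset_pairs he₀) with hh | hh
      · exact hh
      · exact absurd hh hne
    have hineq := h e₀ he₀ x0 x0 hx0feas hzero hx0feas hzero
    have hdiff : obj c (hatx R x0) = obj c x0
        + (∑ t ∈ R.powersetCard 3, c t * (1 - ∏ e ∈ t.powersetCard 2, x0 e)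
           + ∑ e ∈ R.powersetCard 2, c e * (1 - x0 e))
        - (∑ t ∈ Tof (cut R), c t * ∏ e ∈ t.powersetCard 2, x0 e
           + ∑ e ∈ cut R, c e * x0 e) := by
      unfold obj
      rw [triple_sum_split, pair_sum_split]
      ring
    refine ⟨hatx R x0, feasible_hatx hx0feas, ?_, fun e he => hatx_in he⟩
    intro x hx
    have h1 := hopt x hx
    linarith [hdiff, hineq, h1]
end

section
/- Let S be a finite nonempty set, c : binom(S,2) → ℝ, i ∈ S, and S_0 ⊆ S∖{i}. Let S' = S∖(S_0 ∪ {i}) and define c'_p = Σ_{q∈S∖{p}} c_{pq} − 2·c_{pi} for every p ∈ S', c'_{pq} = −2·c_{pq} for every {p,q} ∈ binom(S',2), and c'_∅ = Σ_{q∈S∖{i}} c_{qi}. Then min{ Σ_{{p,q}∈δ(R)} c_{pq} : R ⊆ S, i ∈ R, S_0 ∩ R = ∅ } = min{ Σ_{{p,q}∈binom(S',2)} c'_{pq}·y_p·y_q + Σ_{p∈S'} c'_p·y_p + c'_∅ : y ∈ {0,1}^{S'} }. -/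
/-!
If `x` is the indicator vector of `R`, a pair `{p, q}` is cut exactly when
`x p + x q - 2 x p x q = 1` (and this is `0` otherwise), so the cut value of `R` is a quadratic
polynomial in `x`. Imposing `x i = 1` and `x = 0` on `S₀` and collecting terms gives precisely the
QPBO objective on `S' = S \ (S₀ ∪ {i})`. Feasible sets `R` and `0/1`-vectors on `S'` correspond
to each other with equal values, so both minimisation problems have the same (finite, nonempty)
set of values.
-/

open Finset

namespace Finset

variable {V M : Type*}

theorem sum_powersetCard_mul_prod_of_subset [CommSemiring M] {U T : Finset V} (hUT : U ⊆ T)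
    {x : V → M} (hx : ∀ p ∉ U, x p = 0) (n : ℕ) (g : Finset V → M) :
    ∑ e ∈ T.powersetCard n, g e * ∏ p ∈ e, x p = ∑ e ∈ U.powersetCard n, g e * ∏ p ∈ e, x p := by
  refine (sum_subset (powersetCard_mono hUT) fun e heT heU => ?_).symm
  obtain ⟨p, hpe, hpU⟩ :=
    not_subset.1 fun h => heU (mem_powersetCard.2 ⟨h, (mem_powersetCard.1 heT).2⟩)
  rw [prod_eq_zero hpe (hx p hpU), mul_zero]

variable [DecidableEq V]

theorem sum_powersetCard_two_sum [AddCommMonoid M] (T : Finset V) (f : Finset V → V → M) :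
    ∑ e ∈ T.powersetCard 2, ∑ p ∈ e, f e p = ∑ p ∈ T, ∑ q ∈ T.erase p, f {p, q} p := by
  rw [sum_comm' (t' := T) (s' := fun p => (T.erase p).image fun q => {p, q})]
  · refine sum_congr rfl fun p _ => sum_image ?_
    intro q hq r _ (hqr : ({p, q} : Finset V) = {p, r})
    have : q ∈ ({p, r} : Finset V) := hqr ▸ by simp
    simp only [mem_coe, mem_erase, mem_insert, mem_singleton] at hq this
    exact this.resolve_left hq.1
  · intro e p
    simp only [mem_powersetCard, mem_image, mem_erase, card_eq_two]
    constructor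
    · rintro ⟨⟨hT, a, b, hab, rfl⟩, hp⟩
      simp only [mem_insert, mem_singleton] at hp
      rcases hp with rfl | rfl
      · exact ⟨⟨b, ⟨hab.symm, hT (by simp)⟩, rfl⟩, hT (by simp)⟩
      · exact ⟨⟨a, ⟨hab, hT (by simp)⟩, pair_comm _ _⟩, hT (by simp)⟩
    · rintro ⟨⟨a, ⟨hap, ha⟩, rfl⟩, hp⟩
      exact ⟨⟨by simp [insert_subset_iff, *], p, a, hap.symm, rfl⟩, by simp⟩

theorem sum_powersetCard_two_insert [AddCommMonoid M] {i : V} {T : Finset V} (hi : i ∉ T)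
    (g : Finset V → M) :
    ∑ e ∈ (insert i T).powersetCard 2, g e = ∑ e ∈ T.powersetCard 2, g e + ∑ p ∈ T, g {i, p} := by
  rw [powersetCard_succ_insert hi, sum_union, sum_image, powersetCard_one, sum_map]
  · rfl
  · intro f hf g hg hfg
    simp only [mem_coe, mem_powersetCard] at hf hg
    rw [← erase_insert (fun h => hi (hf.1 h)), ← erase_insert (fun h => hi (hg.1 h))]
    exact congrArg (erase · i) hfg
  · simp only [disjoint_left, mem_powersetCard, mem_image]
    rintro e ⟨hT, -⟩ ⟨f, -, rfl⟩
    exact hi (hT (mem_insert_self i f))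

end Finset

section Qpbo

variable {V : Type*} [Fintype V] [DecidableEq V]

-- The objective of the QPBO in the statement, with `T` in the role of `S'`.
def qpbo (c : Finset V → ℝ) (i : V) (T : Finset V) (y : V → ℝ) : ℝ :=
  ∑ e ∈ T.powersetCard 2, (-2 * c e) * ∏ p ∈ e, y p
    + ∑ p ∈ T, (∑ q ∈ univ \ {p}, c {p, q} - 2 * c {p, i}) * y p
    + ∑ q ∈ univ \ {i}, c {q, i}

theorem qpbo_congr (c : Finset V → ℝ) (i : V) (T : Finset V) {y z : V → ℝ}
    (h : ∀ p ∈ T, y p = z p) : qpbo c i T y = qpbo c i T z := by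
  unfold qpbo
  congr 2
  · exact sum_congr rfl fun e he =>
      by rw [prod_congr rfl fun p hp => h p ((mem_powersetCard.1 he).1 hp)]
  · exact sum_congr rfl fun p hp => by rw [h p hp]

theorem sum_cut_eq_sum_pairs (c : Finset V → ℝ) (R : Finset V) :
    ∑ e ∈ cut R, c e = ∑ e ∈ pairs V, c e *
      (∑ p ∈ e, (if p ∈ R then 1 else 0) - 2 * ∏ p ∈ e, (if p ∈ R then 1 else 0)) := by
  rw [cut, sum_filter]
  refine sum_congr rfl fun e he => ?_
  have he2 : e.card = 2 := (mem_powersetCard.1 he).2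
  have hsub : (∀ p ∈ e, p ∈ R) ↔ (e ∩ R).card = 2 := by
    rw [← subset_iff, ← inter_eq_left, ← he2]
    exact ⟨fun h => by rw [h], fun h => eq_of_subset_of_card_le inter_subset_left h.ge⟩
  have hle : (e ∩ R).card ≤ 2 := he2 ▸ card_le_card inter_subset_left
  simp only [sum_boole, prod_boole, filter_mem_eq_inter, hsub]
  interval_cases (e ∩ R).card <;> norm_num

theorem sum_pairs_eq_qpbo (c : Finset V → ℝ) {i : V} {T : Finset V} (hi : i ∉ T) {x : V → ℝ}
    (hxi : x i = 1) (hx : ∀ p ∉ insert i T, x p = 0) :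
    ∑ e ∈ pairs V, c e * (∑ p ∈ e, x p - 2 * ∏ p ∈ e, x p) = qpbo c i T x := by
  have hlin : ∑ e ∈ pairs V, c e * ∑ p ∈ e, x p
      = ∑ p ∈ T, (∑ q ∈ univ \ {p}, c {p, q}) * x p + ∑ q ∈ univ \ {i}, c {q, i} := by
    simp only [pairs, mul_sum, sum_powersetCard_two_sum, sdiff_singleton_eq_erase, ← sum_mul]
    rw [← sum_subset (subset_univ (insert i T)) fun p _ hp => by rw [hx p hp, mul_zero],
      sum_insert hi, hxi, mul_one, add_comm]
    exact congrArg _ (sum_congr rfl fun q _ => by rw [pair_comm])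
  have hquad : ∑ e ∈ pairs V, c e * ∏ p ∈ e, x p
      = ∑ e ∈ T.powersetCard 2, c e * ∏ p ∈ e, x p + ∑ p ∈ T, c {p, i} * x p := by
    rw [pairs, sum_powersetCard_mul_prod_of_subset (subset_univ _) hx,
      sum_powersetCard_two_insert hi]
    congr 1
    refine sum_congr rfl fun p hp => ?_
    rw [prod_pair (ne_of_mem_of_not_mem hp hi).symm, hxi, one_mul, pair_comm]
  simp only [mul_sub, sum_sub_distrib, mul_left_comm _ (2 : ℝ), ← mul_sum]
  rw [hlin, hquad]
  simp only [qpbo, sub_mul, sum_sub_distrib, mul_assoc, ← mul_sum]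
  ring

theorem sum_cut_eq_qpbo (c : Finset V → ℝ) {i : V} {S₀ R : Finset V} (hiR : i ∈ R)
    (hR : ∀ p ∈ S₀, p ∉ R) :
    ∑ e ∈ cut R, c e = qpbo c i (univ \ insert i S₀) (fun p => if p ∈ R then 1 else 0) := by
  rw [sum_cut_eq_sum_pairs]
  refine sum_pairs_eq_qpbo c (by simp) (if_pos hiR) fun p hp => if_neg (hR p ?_)
  simp only [mem_insert, mem_sdiff, mem_univ, not_or, true_and, not_and, Decidable.not_not] at hp
  exact hp.2 hp.1

theorem exists_sum_cut_eq_qpbo (c : Finset V → ℝ) {i : V} {S₀ : Finset V} (hiS₀ : i ∉ S₀)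
    {y : V → ℝ} (hy : ∀ p ∈ univ \ insert i S₀, y p = 0 ∨ y p = 1) :
    ∃ R : Finset V, i ∈ R ∧ (∀ p ∈ S₀, p ∉ R) ∧
      qpbo c i (univ \ insert i S₀) y = ∑ e ∈ cut R, c e := by
  set R := insert i ((univ \ insert i S₀).filter (y · = 1))
  have hR : ∀ p ∈ S₀, p ∉ R := by
    intro p hp hpR
    simp only [mem_insert, mem_filter, mem_sdiff, mem_univ, not_or, true_and, R] at hpR
    rcases hpR with rfl | ⟨⟨-, hpS₀⟩, -⟩
    exacts [hiS₀ hp, hpS₀ hp]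
  refine ⟨R, mem_insert_self _ _, hR, ?_⟩
  rw [sum_cut_eq_qpbo c (mem_insert_self _ _) hR]
  refine qpbo_congr c i _ fun p hp => ?_
  have hpi : p ≠ i := by rintro rfl; simp at hp
  rcases hy p hp with h | h <;> simp [h, hp, hpi]

end Qpbo

theorem st_cut_to_qpbo_general {V : Type*} [Fintype V] [DecidableEq V]
    (c : Finset V → ℝ) (i : V) (S₀ : Finset V) (hiS₀ : i ∉ S₀) :
    ∃ m : ℝ,
      IsLeast {v : ℝ | ∃ R : Finset V, i ∈ R ∧ (∀ p ∈ S₀, p ∉ R) ∧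
        v = ∑ e ∈ cut R, c e} m ∧
      IsLeast {v : ℝ | ∃ y : V → ℝ,
        (∀ p ∈ (univ : Finset V) \ insert i S₀, y p = 0 ∨ y p = 1) ∧
        v = ∑ e ∈ ((univ : Finset V) \ insert i S₀).powersetCard 2,
              (-2 * c e) * ∏ p ∈ e, y p
          + ∑ p ∈ (univ : Finset V) \ insert i S₀,
              (∑ q ∈ univ \ {p}, c {p, q} - 2 * c {p, i}) * y p
          + ∑ q ∈ univ \ {i}, c {q, i}} m := by
  obtain ⟨R₀, ⟨hiR₀, hR₀⟩, hmin⟩ := Set.exists_min_image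
    {R : Finset V | i ∈ R ∧ ∀ p ∈ S₀, p ∉ R} (fun R => ∑ e ∈ cut R, c e) (Set.toFinite _)
    ⟨{i}, mem_singleton_self i, fun p hp h => hiS₀ (mem_singleton.1 h ▸ hp)⟩
  refine ⟨_, ⟨⟨R₀, hiR₀, hR₀, rfl⟩, ?_⟩, ⟨⟨_, fun p _ => ?_, sum_cut_eq_qpbo c hiR₀ hR₀⟩, ?_⟩⟩
  · rintro _ ⟨R, hiR, hR, rfl⟩
    exact hmin R ⟨hiR, hR⟩
  · by_cases hp : p ∈ R₀ <;> simp [hp]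
  · rintro _ ⟨y, hy, rfl⟩
    obtain ⟨R, hiR, hR, hyR⟩ := exists_sum_cut_eq_qpbo c hiS₀ hy
    exact (hmin R ⟨hiR, hR⟩).trans_eq hyR.symm

/--
Let `S` be a finite nonempty set, `c : binom(S,2) → ℝ`, `i ∈ S`, and
`S₀ ⊆ S∖{i}`.  Let `S' = S∖(S₀ ∪ {i})` and define
`c'_p = Σ_{q ∈ S∖{p}} c_{pq} − 2 c_{pi}` for `p ∈ S'`, `c'_{pq} = −2 c_{pq}` for
`{p,q} ∈ binom(S',2)`, and `c'_∅ = Σ_{q ∈ S∖{i}} c_{qi}`.  Then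
`min{ Σ_{{p,q} ∈ δ(R)} c_{pq} : R ⊆ S, i ∈ R, S₀ ∩ R = ∅ }
  = min{ Σ_{binom(S',2)} c'_{pq} y_p y_q + Σ_{p ∈ S'} c'_p y_p + c'_∅ : y ∈ {0,1}^{S'} }`.
-/
theorem st_cut_to_qpbo {V : Type*} [Fintype V] [DecidableEq V] [Nonempty V]
    (c : Finset V → ℝ) (i : V) (S₀ : Finset V) (hiS₀ : i ∉ S₀) :
    ∃ m : ℝ,
      IsLeast {v : ℝ | ∃ R : Finset V, i ∈ R ∧ (∀ p ∈ S₀, p ∉ R) ∧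
        v = ∑ e ∈ cut R, c e} m ∧
      IsLeast {v : ℝ | ∃ y : V → ℝ,
        (∀ p ∈ (univ : Finset V) \ insert i S₀, y p = 0 ∨ y p = 1) ∧
        v = ∑ e ∈ ((univ : Finset V) \ insert i S₀).powersetCard 2,
              (-2 * c e) * ∏ p ∈ e, y p
          + ∑ p ∈ (univ : Finset V) \ insert i S₀,
              (∑ q ∈ univ \ {p}, c {p, q} - 2 * c {p, i}) * y p
          + ∑ q ∈ univ \ {i}, c {q, i}} m :=
  st_cut_to_qpbo_general c i S₀ hiS₀
end
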